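/- arXiv:0905.1861 — 4 statements merged into one kernel-verified Lean document; each statement's English description precedes it below -/
import Mathlib

section
/- Let Ω ⊆ ℍ be an axially symmetric s-domain and let f : Ω → ℍ be slice regular. Then for any choice of J, K ∈ 𝕊 with J ≠ K, and for every q = x+yI ∈ Ω (with x, y ∈ ℝ and I ∈ 𝕊), one has f(x+yI) = (J−K)⁻¹·(J·f(x+yJ) − K·f(x+yK)) + I·(J−K)⁻¹·(f(x+yJ) − f(x+yK)). -/
open Quaternion

noncomputable section

/-- The 2-sphere of imaginary units in the quaternions. -/
def SpH : Set ℍ[ℝ] := {q | q.re = 0 ∧ ‖q‖ = 1}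

/-- The slice (complex plane) `L_I = {x + y I : x, y ∈ ℝ}`. -/
def sliceL (I : ℍ[ℝ]) : Set ℍ[ℝ] := {q | ∃ x y : ℝ, q = (x : ℍ[ℝ]) + y • I}

/-- `f` has continuous partial derivatives on the `I`-slice part of `Ω` and satisfies the
Cauchy–Riemann equation `∂f/∂x + I ∂f/∂y = 0` there. -/
def SliceHolomorphicOn (I : ℍ[ℝ]) (f : ℍ[ℝ] → ℍ[ℝ]) (Ω : Set ℍ[ℝ]) : Prop :=
  ∃ fx fy : ℝ → ℝ → ℍ[ℝ],
    (∀ x y : ℝ, (x : ℍ[ℝ]) + y • I ∈ Ω →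
      HasDerivAt (fun t : ℝ => f ((t : ℍ[ℝ]) + y • I)) (fx x y) x) ∧
    (∀ x y : ℝ, (x : ℍ[ℝ]) + y • I ∈ Ω →
      HasDerivAt (fun t : ℝ => f ((x : ℍ[ℝ]) + t • I)) (fy x y) y) ∧
    ContinuousOn (fun p : ℝ × ℝ => fx p.1 p.2) {p : ℝ × ℝ | (p.1 : ℍ[ℝ]) + p.2 • I ∈ Ω} ∧
    ContinuousOn (fun p : ℝ × ℝ => fy p.1 p.2) {p : ℝ × ℝ | (p.1 : ℍ[ℝ]) + p.2 • I ∈ Ω} ∧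
    ∀ x y : ℝ, (x : ℍ[ℝ]) + y • I ∈ Ω → fx x y + I * fy x y = 0

/-- `f` is slice regular on `Ω`. -/
def SliceRegularOn (f : ℍ[ℝ] → ℍ[ℝ]) (Ω : Set ℍ[ℝ]) : Prop :=
  ∀ I ∈ SpH, SliceHolomorphicOn I f Ω

/-- `Ω` is axially symmetric. -/
def AxSymm (Ω : Set ℍ[ℝ]) : Prop :=
  ∀ (x y : ℝ), ∀ I ∈ SpH, (x : ℍ[ℝ]) + y • I ∈ Ω → ∀ J ∈ SpH, (x : ℍ[ℝ]) + y • J ∈ Ω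

/-- `Ω` is an s-domain: a domain meeting the real axis whose slices are connected. -/
def IsSDomain (Ω : Set ℍ[ℝ]) : Prop :=
  IsOpen Ω ∧ IsConnected Ω ∧ (∃ x : ℝ, (x : ℍ[ℝ]) ∈ Ω) ∧
    ∀ I ∈ SpH, IsConnected (Ω ∩ sliceL I)

/-- The axially symmetric completion of a set `S ⊆ ℍ`. -/
def symmComp (S : Set ℍ[ℝ]) : Set ℍ[ℝ] :=
  {q | ∃ (x y : ℝ) (I : ℍ[ℝ]), I ∈ SpH ∧ q = (x : ℍ[ℝ]) + y • I ∧
    ∃ J ∈ SpH, (x : ℍ[ℝ]) + y • J ∈ S}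

/-- A domain of the slice `L_I`: a nonempty connected relatively open subset of `L_I`. -/
def IsSliceDomain (I : ℍ[ℝ]) (D : Set ℍ[ℝ]) : Prop :=
  D ⊆ sliceL I ∧ IsConnected D ∧ IsOpen {p : ℝ × ℝ | (p.1 : ℍ[ℝ]) + p.2 • I ∈ D}

/-!
On the slice `L_I`, the difference `g` between `f` and the right-hand side of the formula satisfies
the Cauchy–Riemann equation `∂g/∂x + I ∂g/∂y = 0` with continuous partial derivatives: the `J`- and
`K`-terms are arranged so that the Cauchy–Riemann equations of `f` on `L_J` and `L_K` cancel. On the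
real axis `g` vanishes, since there all three slices meet. For every real functional `l`, the
function `l ∘ g - i (l ∘ (I * g))` is then holomorphic on the connected slice and vanishes on the
real axis, hence vanishes identically; so `g = 0`.
-/

open Filter Topology Set

structure HasContinuousPartialsOn {E : Type*} [NormedAddCommGroup E] [NormedSpace ℝ E]
    (g gx gy : ℝ → ℝ → E) (s : Set (ℝ × ℝ)) : Prop where
  hasDerivAt_fst : ∀ x y : ℝ, (x, y) ∈ s → HasDerivAt (fun t => g t y) (gx x y) x
  hasDerivAt_snd : ∀ x y : ℝ, (x, y) ∈ s → HasDerivAt (fun t => g x t) (gy x y) y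
  continuousOn_fst : ContinuousOn (fun p : ℝ × ℝ => gx p.1 p.2) s
  continuousOn_snd : ContinuousOn (fun p : ℝ × ℝ => gy p.1 p.2) s

theorem eqOn_zero_of_forall_ofReal_eq_zero {E : Type*} [NormedAddCommGroup E] [NormedSpace ℂ E]
    [CompleteSpace E] {φ : ℂ → E} {U : Set ℂ} (hφ : DifferentiableOn ℂ φ U) (hU : IsOpen U)
    (hUc : IsPreconnected U) {x₀ : ℝ} (hx₀ : (x₀ : ℂ) ∈ U)
    (hreal : ∀ x : ℝ, (x : ℂ) ∈ U → φ x = 0) : EqOn φ 0 U := by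
  refine (hφ.analyticOnNhd hU).eqOn_zero_of_preconnected_of_frequently_eq_zero hUc hx₀ ?_
  have hofReal : Tendsto ((↑) : ℝ → ℂ) (𝓝[≠] x₀) (𝓝[≠] (x₀ : ℂ)) :=
    tendsto_nhdsWithin_of_tendsto_nhds_of_eventually_within _
      Complex.continuous_ofReal.continuousWithinAt.tendsto
      (eventually_nhdsWithin_of_forall fun x hx => by simpa using hx)
  refine hofReal.frequently (Eventually.frequently ?_)
  have hnear : ∀ᶠ x : ℝ in 𝓝 x₀, (x : ℂ) ∈ U :=
    Complex.continuous_ofReal.continuousAt.preimage_mem_nhds (hU.mem_nhds hx₀)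
  filter_upwards [nhdsWithin_le_nhds hnear] with x hx using hreal x hx

namespace HasContinuousPartialsOn

section NormedSpace

variable {E F : Type*} [NormedAddCommGroup E] [NormedSpace ℝ E] [NormedAddCommGroup F]
  [NormedSpace ℝ F] {g gx gy h hx hy : ℝ → ℝ → E} {s : Set (ℝ × ℝ)}

theorem mono {t : Set (ℝ × ℝ)} (hg : HasContinuousPartialsOn g gx gy s) (hts : t ⊆ s) :
    HasContinuousPartialsOn g gx gy t where
  hasDerivAt_fst x y hxy := hg.hasDerivAt_fst x y (hts hxy)
  hasDerivAt_snd x y hxy := hg.hasDerivAt_snd x y (hts hxy)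
  continuousOn_fst := hg.continuousOn_fst.mono hts
  continuousOn_snd := hg.continuousOn_snd.mono hts

theorem add (hg : HasContinuousPartialsOn g gx gy s) (hh : HasContinuousPartialsOn h hx hy s) :
    HasContinuousPartialsOn (fun x y => g x y + h x y) (fun x y => gx x y + hx x y)
      (fun x y => gy x y + hy x y) s where
  hasDerivAt_fst x y hxy := (hg.hasDerivAt_fst x y hxy).add (hh.hasDerivAt_fst x y hxy)
  hasDerivAt_snd x y hxy := (hg.hasDerivAt_snd x y hxy).add (hh.hasDerivAt_snd x y hxy)
  continuousOn_fst := hg.continuousOn_fst.add hh.continuousOn_fst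
  continuousOn_snd := hg.continuousOn_snd.add hh.continuousOn_snd

theorem sub (hg : HasContinuousPartialsOn g gx gy s) (hh : HasContinuousPartialsOn h hx hy s) :
    HasContinuousPartialsOn (fun x y => g x y - h x y) (fun x y => gx x y - hx x y)
      (fun x y => gy x y - hy x y) s where
  hasDerivAt_fst x y hxy := (hg.hasDerivAt_fst x y hxy).sub (hh.hasDerivAt_fst x y hxy)
  hasDerivAt_snd x y hxy := (hg.hasDerivAt_snd x y hxy).sub (hh.hasDerivAt_snd x y hxy)
  continuousOn_fst := hg.continuousOn_fst.sub hh.continuousOn_fst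
  continuousOn_snd := hg.continuousOn_snd.sub hh.continuousOn_snd

theorem clm_comp (hg : HasContinuousPartialsOn g gx gy s) (T : E →L[ℝ] F) :
    HasContinuousPartialsOn (fun x y => T (g x y)) (fun x y => T (gx x y))
      (fun x y => T (gy x y)) s where
  hasDerivAt_fst x y hxy := T.hasFDerivAt.comp_hasDerivAt x (hg.hasDerivAt_fst x y hxy)
  hasDerivAt_snd x y hxy := T.hasFDerivAt.comp_hasDerivAt y (hg.hasDerivAt_snd x y hxy)
  continuousOn_fst := T.continuous.comp_continuousOn hg.continuousOn_fst
  continuousOn_snd := T.continuous.comp_continuousOn hg.continuousOn_snd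

theorem hasStrictFDerivAt (hg : HasContinuousPartialsOn g gx gy s) (hs : IsOpen s)
    {p : ℝ × ℝ} (hp : p ∈ s) :
    HasStrictFDerivAt (fun q : ℝ × ℝ => g q.1 q.2)
      (((1 : ℝ →L[ℝ] ℝ).smulRight (gx p.1 p.2)).coprod
        ((1 : ℝ →L[ℝ] ℝ).smulRight (gy p.1 p.2))) p := by
  have hcont : Continuous fun v : E => (1 : ℝ →L[ℝ] ℝ).smulRight v :=
    (ContinuousLinearMap.smulRightL ℝ ℝ E 1).continuous
  refine hasStrictFDerivAt_uncurry_coprod (f₁ := fun x y => (1 : ℝ →L[ℝ] ℝ).smulRight (gx x y))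
    (f₂ := fun x y => (1 : ℝ →L[ℝ] ℝ).smulRight (gy x y)) ?_ ?_ ?_ ?_
  · filter_upwards [hs.mem_nhds hp] with q hq
    exact (hg.hasDerivAt_fst q.1 q.2 hq).hasFDerivAt
  · filter_upwards [hs.mem_nhds hp] with q hq
    exact (hg.hasDerivAt_snd q.1 q.2 hq).hasFDerivAt
  · exact hcont.continuousAt.comp (hg.continuousOn_fst.continuousAt (hs.mem_nhds hp))
  · exact hcont.continuousAt.comp (hg.continuousOn_snd.continuousAt (hs.mem_nhds hp))

end NormedSpace

theorem differentiableOn_complex {E : Type*} [NormedAddCommGroup E] [NormedSpace ℂ E]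
    {g gx gy : ℝ → ℝ → E} {s : Set (ℝ × ℝ)}
    (hg : HasContinuousPartialsOn g gx gy s) (hs : IsOpen s)
    (hcr : ∀ x y : ℝ, (x, y) ∈ s → gy x y = Complex.I • gx x y) :
    DifferentiableOn ℂ (fun z : ℂ => g z.re z.im) (Complex.equivRealProd ⁻¹' s) := by
  intro z hz
  have hreal := (hg.hasStrictFDerivAt hs hz).hasFDerivAt.comp z
    Complex.equivRealProdCLM.hasFDerivAt
  refine (hasFDerivAt_of_restrictScalars ℝ (f' := (1 : ℂ →L[ℂ] ℂ).smulRight (gx z.re z.im))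
    hreal ?_).differentiableAt.differentiableWithinAt
  ext w
  show w • gx z.re z.im = w.re • gx z.re z.im + w.im • gy z.re z.im
  conv_lhs => rw [← Complex.re_add_im w, add_smul, mul_smul, Complex.coe_smul, Complex.coe_smul]
  rw [hcr z.re z.im hz]

variable {A : Type*} [NormedRing A] [NormedAlgebra ℝ A] {g gx gy : ℝ → ℝ → A}
  {s : Set (ℝ × ℝ)}

theorem const_mul (hg : HasContinuousPartialsOn g gx gy s) (c : A) :
    HasContinuousPartialsOn (fun x y => c * g x y) (fun x y => c * gx x y)
      (fun x y => c * gy x y) s :=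
  hg.clm_comp (ContinuousLinearMap.mul ℝ A c)

theorem eq_zero_of_forall_real_eq_zero {I : A} (hI : I * I = -1)
    (hg : HasContinuousPartialsOn g gx gy s)
    (hcr : ∀ x y : ℝ, (x, y) ∈ s → gx x y + I * gy x y = 0)
    (hs : IsOpen s) (hsc : IsPreconnected s) {x₀ : ℝ} (hx₀ : (x₀, 0) ∈ s)
    (hreal : ∀ x : ℝ, (x, 0) ∈ s → g x 0 = 0) {x y : ℝ} (hxy : (x, y) ∈ s) : g x y = 0 := by
  refine SeparatingDual.eq_zero_of_forall_dual_eq_zero (R := ℝ) fun l => ?_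
  -- `T` turns left multiplication by `I` into multiplication by `i`, so `T ∘ g` is holomorphic.
  set T : A →L[ℝ] ℂ := Complex.ofRealCLM ∘L l -
    Complex.I • (Complex.ofRealCLM ∘L l ∘L ContinuousLinearMap.mul ℝ A I) with hTdef
  have hT : ∀ a, T (I * a) = Complex.I • T a := fun a => by
    simp only [hTdef, sub_apply, ContinuousLinearMap.comp_apply, Complex.ofRealCLM_apply,
      smul_apply, ContinuousLinearMap.mul_apply', ← mul_assoc, hI, neg_one_mul, map_neg,
      smul_eq_mul, mul_neg, sub_neg_eq_add]
    linear_combination (l (I * a) : ℂ) * Complex.I_sq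
  have hgy : ∀ x y : ℝ, (x, y) ∈ s → gy x y = I * gx x y := fun x y hxy => by
    have := congrArg (I * ·) (hcr x y hxy)
    simp only [mul_add, ← mul_assoc, hI, neg_one_mul, mul_zero] at this
    exact (add_neg_eq_zero.1 this).symm
  have hT0 := eqOn_zero_of_forall_ofReal_eq_zero
    ((hg.clm_comp T).differentiableOn_complex hs fun x y hxy => by simp only [hgy x y hxy, hT])
    (hs.preimage Complex.equivRealProdCLM.continuous)
    (Complex.equivRealProdCLM.toHomeomorph.isPreconnected_preimage.2 hsc)
    (x₀ := x₀) (by simpa using hx₀) (fun t ht => by simp [hreal t (by simpa using ht)])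
    (show (⟨x, y⟩ : ℂ) ∈ Complex.equivRealProd ⁻¹' s from hxy)
  simpa [hTdef] using congrArg Complex.re hT0

end HasContinuousPartialsOn

theorem cauchyRiemann_representation {A : Type*} [Ring A] {I J K : A} (hI : I * I = -1)
    (hJ : J * J = -1) (hK : K * K = -1) (c : A) {aI aJ aK bI bJ bK : A}
    (haI : aI + I * bI = 0) (haJ : aJ + J * bJ = 0) (haK : aK + K * bK = 0) :
    aI - (c * (J * aJ - K * aK) + I * (c * (aJ - aK))) +
      I * (bI - (c * (J * bJ - K * bK) + I * (c * (bJ - bK)))) = 0 := by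
  rw [eq_neg_of_add_eq_zero_left haJ, eq_neg_of_add_eq_zero_left haK]
  simp only [mul_neg, ← mul_assoc, hJ, hK, hI, mul_add, mul_sub]
  refine Eq.trans ?_ haI
  noncomm_ring

theorem mul_self_eq_neg_one_of_mem_SpH {I : ℍ[ℝ]} (hI : I ∈ SpH) : I * I = -1 := by
  rw [← sq, Quaternion.sq_eq_neg_normSq.2 hI.1, Quaternion.normSq_eq_norm_mul_self, hI.2]
  norm_num

def sliceMap (I : ℍ[ℝ]) : ℝ × ℝ →ₗ[ℝ] ℍ[ℝ] where
  toFun p := (p.1 : ℍ[ℝ]) + p.2 • I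
  map_add' p q := by
    simp only [Prod.fst_add, Prod.snd_add, Quaternion.coe_add, add_smul]
    abel
  map_smul' r p := by
    simp only [Prod.smul_fst, Prod.smul_snd, smul_eq_mul, RingHom.id_apply, smul_add, smul_smul,
      Quaternion.smul_coe]

theorem sliceMap_injective {I : ℍ[ℝ]} (hI : I ∈ SpH) : Function.Injective (sliceMap I) := by
  refine (injective_iff_map_eq_zero _).2 fun p hp => ?_
  have hre : p.1 = 0 := by simpa [sliceMap, hI.1] using congrArg QuaternionAlgebra.re hp
  have hI0 : I ≠ 0 := by rintro rfl; simpa using hI.2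
  have him : p.2 = 0 := by simpa [sliceMap, hre, hI0] using hp
  exact Prod.ext hre him

theorem isPreconnected_sliceMap_preimage {Ω : Set ℍ[ℝ]} {I : ℍ[ℝ]} (hI : I ∈ SpH)
    (hΩ : IsPreconnected (Ω ∩ sliceL I)) : IsPreconnected (sliceMap I ⁻¹' Ω) := by
  have himage : sliceMap I '' (sliceMap I ⁻¹' Ω) = Ω ∩ sliceL I := by
    rw [image_preimage_eq_inter_range]
    congr 1
    ext q
    simp [sliceL, sliceMap, eq_comm]
  rw [← ((sliceMap I).isClosedEmbedding_of_injective
    (LinearMap.ker_eq_bot.2 (sliceMap_injective hI))).isInducing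
    |>.isPreconnected_image, himage]
  exact hΩ

theorem SliceHolomorphicOn.exists_hasContinuousPartialsOn {I : ℍ[ℝ]} {f : ℍ[ℝ] → ℍ[ℝ]}
    {Ω : Set ℍ[ℝ]} (hf : SliceHolomorphicOn I f Ω) :
    ∃ fx fy : ℝ → ℝ → ℍ[ℝ],
      HasContinuousPartialsOn (fun x y => f (x + y • I)) fx fy (sliceMap I ⁻¹' Ω) ∧
        ∀ x y : ℝ, (x, y) ∈ sliceMap I ⁻¹' Ω → fx x y + I * fy x y = 0 :=
  let ⟨fx, fy, hfx, hfy, hcx, hcy, hcr⟩ := hf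
  ⟨fx, fy, ⟨hfx, hfy, hcx, hcy⟩, hcr⟩

/-- General Representation Formula. -/
theorem general_representation_formula
    (Ω : Set ℍ[ℝ]) (hΩ : IsSDomain Ω) (hax : AxSymm Ω)
    (f : ℍ[ℝ] → ℍ[ℝ]) (hf : SliceRegularOn f Ω)
    (J K : ℍ[ℝ]) (hJ : J ∈ SpH) (hK : K ∈ SpH) (hJK : J ≠ K)
    (x y : ℝ) (I : ℍ[ℝ]) (hI : I ∈ SpH) (hq : (x : ℍ[ℝ]) + y • I ∈ Ω) :
    f ((x : ℍ[ℝ]) + y • I) =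
      (J - K)⁻¹ * (J * f ((x : ℍ[ℝ]) + y • J) - K * f ((x : ℍ[ℝ]) + y • K)) +
        I * ((J - K)⁻¹ * (f ((x : ℍ[ℝ]) + y • J) - f ((x : ℍ[ℝ]) + y • K))) := by
  obtain ⟨hopen, -, ⟨x₀, hx₀⟩, hslices⟩ := hΩ
  have hIJ : sliceMap I ⁻¹' Ω ⊆ sliceMap J ⁻¹' Ω := fun p hp => hax p.1 p.2 I hI hp J hJ
  have hIK : sliceMap I ⁻¹' Ω ⊆ sliceMap K ⁻¹' Ω := fun p hp => hax p.1 p.2 I hI hp K hK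
  obtain ⟨fxI, fyI, hfI, hcrI⟩ := (hf I hI).exists_hasContinuousPartialsOn
  obtain ⟨fxJ, fyJ, hfJ, hcrJ⟩ := (hf J hJ).exists_hasContinuousPartialsOn
  obtain ⟨fxK, fyK, hfK, hcrK⟩ := (hf K hK).exists_hasContinuousPartialsOn
  replace hfJ := hfJ.mono hIJ
  replace hfK := hfK.mono hIK
  have hdiff := hfI.sub <| (((hfJ.const_mul J).sub (hfK.const_mul K)).const_mul (J - K)⁻¹).add
    (((hfJ.sub hfK).const_mul (J - K)⁻¹).const_mul I)
  refine sub_eq_zero.1 <| hdiff.eq_zero_of_forall_real_eq_zero (mul_self_eq_neg_one_of_mem_SpH hI)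
    (fun x y hxy => cauchyRiemann_representation (mul_self_eq_neg_one_of_mem_SpH hI)
      (mul_self_eq_neg_one_of_mem_SpH hJ) (mul_self_eq_neg_one_of_mem_SpH hK) _ (hcrI x y hxy)
      (hcrJ x y (hIJ hxy)) (hcrK x y (hIK hxy)))
    (hopen.preimage (sliceMap I).continuous_of_finiteDimensional)
    (isPreconnected_sliceMap_preimage hI (hslices I hI).isPreconnected)
    (x₀ := x₀) (by simpa [sliceMap] using hx₀) (fun t _ => ?_) hq
  simp [← sub_mul, ← mul_assoc, inv_mul_cancel₀ (sub_ne_zero.2 hJK)]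
end
end

section
/- Let Ω ⊆ ℍ be an axially symmetric s-domain and let f : Ω → ℍ be slice regular. For all x, y ∈ ℝ such that x+yI ∈ Ω for every I ∈ 𝕊, there exist b, c ∈ ℍ such that for every pair J, K ∈ 𝕊 with J ≠ K one has (J−K)⁻¹·(J·f(x+yJ) − K·f(x+yK)) = b and (J−K)⁻¹·(f(x+yJ) − f(x+yK)) = c. -/
open Quaternion

noncomputable section

/-!
Fix `J ∈ 𝕊`. For every `I ∈ 𝕊` one has `(1 - IJ) J = I (1 - IJ)` and `(1 + IJ) (-J) = I (1 + IJ)`,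
so left multiplication by these quaternions turns solutions of the Cauchy–Riemann equation for
`J` and `-J` into solutions for `I`. Hence `f(x + yI)` and
`½ (1 - IJ) f(x + yJ) + ½ (1 + IJ) f(x - yJ)` both solve the Cauchy–Riemann equation for `I` on
the slice `Ω ∩ L_I`, and they agree on the real axis. By the identity principle they agree on the
whole slice, so `f(x + yI) = a + I b` with `a, b` independent of `I`, and the two quotients of the
theorem are `a` and `b`.

The identity principle on a slice reduces to the holomorphic one: `q ↦ ⟪e, q⟫ - i ⟪e, I q⟫`
turns left multiplication by `I` into multiplication by `i`, so it carries solutions for `I` to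
holomorphic functions, and taking `e` to be a value of the solution shows that value is `0`.
-/

open Topology Filter

namespace SpH

lemma mul_self_eq_neg_one {I : ℍ[ℝ]} (hI : I ∈ SpH) : I * I = -1 := by
  rw [← sq, Quaternion.sq_eq_neg_normSq.2 hI.1, Quaternion.normSq_eq_norm_mul_self, hI.2]
  norm_num

lemma neg_mem {I : ℍ[ℝ]} (hI : I ∈ SpH) : -I ∈ SpH := ⟨by simp [hI.1], by simp [hI.2]⟩

lemma nonempty : SpH.Nonempty := by
  let i : ℍ[ℝ] := ⟨0, 1, 0, 0⟩
  have h : ‖i‖ * ‖i‖ = 1 := by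
    rw [← Quaternion.normSq_eq_norm_mul_self, Quaternion.normSq_def']; norm_num [i]
  exact ⟨i, rfl, by nlinarith [norm_nonneg i]⟩

end SpH

def sliceParams (I : ℍ[ℝ]) (Ω : Set ℍ[ℝ]) : Set (ℝ × ℝ) := {p | (p.1 : ℍ[ℝ]) + p.2 • I ∈ Ω}

lemma isOpen_sliceParams (I : ℍ[ℝ]) {Ω : Set ℍ[ℝ]} (hΩ : IsOpen Ω) :
    IsOpen (sliceParams I Ω) :=
  hΩ.preimage <| (Quaternion.continuous_coe.comp continuous_fst).add
    (continuous_snd.smul continuous_const)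

lemma re_mul_coe_add_smul {I : ℍ[ℝ]} (hI : I ∈ SpH) (x y : ℝ) :
    (I * ((x : ℍ[ℝ]) + y • I)).re = -y := by
  rw [mul_add, Quaternion.mul_coe_eq_smul, mul_smul_comm, SpH.mul_self_eq_neg_one hI]
  simp [hI.1]

lemma isPreconnected_sliceParams {I : ℍ[ℝ]} (hI : I ∈ SpH) {Ω : Set ℍ[ℝ]}
    (hΩ : IsPreconnected (Ω ∩ sliceL I)) : IsPreconnected (sliceParams I Ω) := by
  have hinv : ∀ x y : ℝ, (((x : ℍ[ℝ]) + y • I).re, -(I * ((x : ℍ[ℝ]) + y • I)).re) = (x, y) :=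
    fun x y => by simp [re_mul_coe_add_smul hI, hI.1]
  have himage : (fun q : ℍ[ℝ] => (q.re, -(I * q).re)) '' (Ω ∩ sliceL I) = sliceParams I Ω := by
    ext ⟨x, y⟩
    constructor
    · rintro ⟨q, ⟨hqΩ, a, b, rfl⟩, hq⟩
      obtain ⟨rfl, rfl⟩ := Prod.mk.inj ((hinv a b).symm.trans hq)
      exact hqΩ
    · intro h
      exact ⟨_, ⟨h, x, y, rfl⟩, hinv x y⟩
  rw [← himage]
  exact hΩ.image _ (Quaternion.continuous_re.prodMk
    (Quaternion.continuous_re.comp (continuous_const_mul I)).neg).continuousOn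

lemma AxSymm.sliceParams_subset {Ω : Set ℍ[ℝ]} (hax : AxSymm Ω) {I J : ℍ[ℝ]} (hI : I ∈ SpH)
    (hJ : J ∈ SpH) : sliceParams I Ω ⊆ sliceParams J Ω :=
  fun p hp => hax p.1 p.2 I hI hp J hJ

def complexComponent (I e : ℍ[ℝ]) : ℍ[ℝ] →L[ℝ] ℂ :=
  Complex.ofRealCLM.comp (innerSL ℝ e) -
    (Complex.I • Complex.ofRealCLM).comp ((innerSL ℝ e).comp (ContinuousLinearMap.mul ℝ ℍ[ℝ] I))

lemma complexComponent_apply (I e q : ℍ[ℝ]) :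
    complexComponent I e q = (inner ℝ e q : ℂ) - Complex.I * (inner ℝ e (I * q) : ℂ) := by
  simp [complexComponent]

lemma re_complexComponent (I e q : ℍ[ℝ]) : (complexComponent I e q).re = inner ℝ e q := by
  simp [complexComponent_apply]

lemma complexComponent_mul_left {I : ℍ[ℝ]} (hI : I * I = -1) (e q : ℍ[ℝ]) :
    complexComponent I e (I * q) = Complex.I * complexComponent I e q := by
  simp only [complexComponent_apply, ← mul_assoc, hI, neg_one_mul, inner_neg_right,
    Complex.ofReal_neg, mul_sub, ← mul_assoc Complex.I, Complex.I_mul_I]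
  ring

def IsCauchyRiemannOn (I : ℍ[ℝ]) (F : ℝ → ℝ → ℍ[ℝ]) (U : Set (ℝ × ℝ)) : Prop :=
  ∃ Fx Fy : ℝ → ℝ → ℍ[ℝ],
    (∀ x y : ℝ, (x, y) ∈ U → HasDerivAt (fun t : ℝ => F t y) (Fx x y) x) ∧
    (∀ x y : ℝ, (x, y) ∈ U → HasDerivAt (fun t : ℝ => F x t) (Fy x y) y) ∧
    ContinuousOn (fun p : ℝ × ℝ => Fx p.1 p.2) U ∧
    ContinuousOn (fun p : ℝ × ℝ => Fy p.1 p.2) U ∧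
    ∀ x y : ℝ, (x, y) ∈ U → Fx x y + I * Fy x y = 0

lemma SliceRegularOn.isCauchyRiemannOn {f : ℍ[ℝ] → ℍ[ℝ]} {Ω : Set ℍ[ℝ]}
    (hf : SliceRegularOn f Ω) {I : ℍ[ℝ]} (hI : I ∈ SpH) :
    IsCauchyRiemannOn I (fun x y => f ((x : ℍ[ℝ]) + y • I)) (sliceParams I Ω) :=
  hf I hI

namespace IsCauchyRiemannOn

variable {I J : ℍ[ℝ]} {F G : ℝ → ℝ → ℍ[ℝ]} {U V : Set (ℝ × ℝ)}

lemma mono (h : IsCauchyRiemannOn I F V) (hUV : U ⊆ V) : IsCauchyRiemannOn I F U := by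
  obtain ⟨Fx, Fy, hx, hy, hcx, hcy, hCR⟩ := h
  exact ⟨Fx, Fy, fun x y hp => hx x y (hUV hp), fun x y hp => hy x y (hUV hp),
    hcx.mono hUV, hcy.mono hUV, fun x y hp => hCR x y (hUV hp)⟩

lemma sub (hF : IsCauchyRiemannOn I F U) (hG : IsCauchyRiemannOn I G U) :
    IsCauchyRiemannOn I (fun x y => F x y - G x y) U := by
  obtain ⟨Fx, Fy, hFx, hFy, hcFx, hcFy, hFCR⟩ := hF
  obtain ⟨Gx, Gy, hGx, hGy, hcGx, hcGy, hGCR⟩ := hG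
  refine ⟨fun x y => Fx x y - Gx x y, fun x y => Fy x y - Gy x y,
    fun x y hp => (hFx x y hp).sub (hGx x y hp), fun x y hp => (hFy x y hp).sub (hGy x y hp),
    hcFx.sub hcGx, hcFy.sub hcGy, fun x y hp => ?_⟩
  show Fx x y - Gx x y + I * (Fy x y - Gy x y) = 0
  rw [mul_sub, sub_add_sub_comm, hFCR x y hp, hGCR x y hp, sub_zero]

lemma const_mul (h : IsCauchyRiemannOn J F U) {c : ℍ[ℝ]} (hc : c * J = I * c) :
    IsCauchyRiemannOn I (fun x y => c * F x y) U := by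
  obtain ⟨Fx, Fy, hx, hy, hcx, hcy, hCR⟩ := h
  refine ⟨fun x y => c * Fx x y, fun x y => c * Fy x y,
    fun x y hp => (hx x y hp).const_mul c, fun x y hp => (hy x y hp).const_mul c,
    continuousOn_const.mul hcx, continuousOn_const.mul hcy, fun x y hp => ?_⟩
  show c * Fx x y + I * (c * Fy x y) = 0
  rw [← mul_assoc, ← hc, mul_assoc, ← mul_add, hCR x y hp, mul_zero]

lemma exists_hasFDerivAt (h : IsCauchyRiemannOn I F U) (hI : I * I = -1) (hU : IsOpen U)
    {p : ℝ × ℝ} (hp : p ∈ U) :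
    ∃ v : ℍ[ℝ], HasFDerivAt (Function.uncurry F)
      ((ContinuousLinearMap.toSpanSingleton ℝ v).coprod
        (ContinuousLinearMap.toSpanSingleton ℝ (I * v))) p := by
  obtain ⟨Fx, Fy, hx, hy, hcx, hcy, hCR⟩ := h
  have hFy : Fy p.1 p.2 = I * Fx p.1 p.2 := by
    have := congrArg (I * ·) (hCR p.1 p.2 hp)
    simp only [mul_add, ← mul_assoc, hI, neg_one_mul, mul_zero] at this
    exact (add_neg_eq_zero.1 this).symm
  have hspan : Continuous (ContinuousLinearMap.toSpanSingleton ℝ : ℍ[ℝ] → ℝ →L[ℝ] ℍ[ℝ]) :=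
    (ContinuousLinearMap.toSpanSingletonLIE ℝ ℍ[ℝ]).continuous
  refine ⟨Fx p.1 p.2, hFy ▸ (hasStrictFDerivAt_uncurry_coprod
    (f₁ := fun x y => ContinuousLinearMap.toSpanSingleton ℝ (Fx x y))
    (f₂ := fun x y => ContinuousLinearMap.toSpanSingleton ℝ (Fy x y)) ?_ ?_ ?_ ?_).hasFDerivAt⟩
  · filter_upwards [hU.mem_nhds hp] with q hq using (hx q.1 q.2 hq).hasFDerivAt
  · filter_upwards [hU.mem_nhds hp] with q hq using (hy q.1 q.2 hq).hasFDerivAt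
  · exact hspan.continuousAt.comp (hcx.continuousAt (hU.mem_nhds hp))
  · exact hspan.continuousAt.comp (hcy.continuousAt (hU.mem_nhds hp))

lemma differentiableOn_complexComponent (h : IsCauchyRiemannOn I F U) (hI : I * I = -1)
    (hU : IsOpen U) (e : ℍ[ℝ]) :
    DifferentiableOn ℂ (fun z : ℂ => complexComponent I e (F z.re z.im))
      (Complex.equivRealProd ⁻¹' U) := by
  intro z hz
  obtain ⟨v, hv⟩ := h.exists_hasFDerivAt hI hU hz
  have hderiv := (complexComponent I e).hasFDerivAt.comp z
    (hv.comp z Complex.equivRealProdCLM.hasFDerivAt)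
  refine (hderiv.complexOfReal_hasFDerivAt ?_).differentiableAt.differentiableWithinAt
  simp [complexComponent_mul_left hI]

theorem eqOn_zero_of_preconnected_of_eventually_eq_zero (h : IsCauchyRiemannOn I F U)
    (hI : I * I = -1) (hU : IsOpen U) (hUc : IsPreconnected U) {x₀ : ℝ} (h₀ : (x₀, 0) ∈ U)
    (hzero : ∀ᶠ t in 𝓝 x₀, F t 0 = 0) : Set.EqOn (Function.uncurry F) 0 U := by
  intro p hp
  set e := F p.1 p.2
  have hUco : IsOpen (Complex.equivRealProd ⁻¹' U) :=
    hU.preimage Complex.equivRealProdCLM.continuous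
  have hUcc : IsPreconnected (Complex.equivRealProd ⁻¹' U) :=
    Complex.equivRealProdCLM.toHomeomorph.isPreconnected_preimage.2 hUc
  have hofReal : Tendsto ((↑) : ℝ → ℂ) (𝓝[≠] x₀) (𝓝[≠] (x₀ : ℂ)) :=
    Complex.continuous_ofReal.continuousWithinAt.tendsto_nhdsWithin
      fun t ht => by simpa using ht
  have hfreq : ∃ᶠ z in 𝓝[≠] (x₀ : ℂ), complexComponent I e (F z.re z.im) = 0 :=
    hofReal.frequently <| (hzero.filter_mono nhdsWithin_le_nhds).frequently.mono
      fun t ht => by simp [ht]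
  have hG := ((h.differentiableOn_complexComponent hI hU e).analyticOnNhd hUco
    ).eqOn_zero_of_preconnected_of_frequently_eq_zero hUcc (by simpa using h₀) hfreq
    (show (⟨p.1, p.2⟩ : ℂ) ∈ Complex.equivRealProd ⁻¹' U from hp)
  have he : inner ℝ e e = 0 := by
    simpa only [Pi.zero_apply, Complex.zero_re, re_complexComponent] using congrArg Complex.re hG
  exact inner_self_eq_zero.1 he

end IsCauchyRiemannOn

section RepresentationFormula

variable {Ω : Set ℍ[ℝ]} {f : ℍ[ℝ] → ℍ[ℝ]}

theorem SliceRegularOn.eq_smul_mul_add_smul_mul (hΩ : IsSDomain Ω) (hax : AxSymm Ω)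
    (hf : SliceRegularOn f Ω) {I J : ℍ[ℝ]} (hI : I ∈ SpH) (hJ : J ∈ SpH) {x y : ℝ}
    (hxy : (x : ℍ[ℝ]) + y • I ∈ Ω) :
    f ((x : ℍ[ℝ]) + y • I) = ((2 : ℝ)⁻¹ • (1 - I * J)) * f ((x : ℍ[ℝ]) + y • J) +
      ((2 : ℝ)⁻¹ • (1 + I * J)) * f ((x : ℍ[ℝ]) + y • -J) := by
  set c₁ : ℍ[ℝ] := (2 : ℝ)⁻¹ • (1 - I * J)
  set c₂ : ℍ[ℝ] := (2 : ℝ)⁻¹ • (1 + I * J)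
  have hc₁ : c₁ * J = I * c₁ := by
    simp only [c₁, smul_mul_assoc, mul_smul_comm, sub_mul, mul_sub, one_mul, mul_one,
      mul_assoc, SpH.mul_self_eq_neg_one hJ, ← mul_assoc I I, SpH.mul_self_eq_neg_one hI, mul_neg, neg_mul]
    module
  have hc₂ : c₂ * -J = I * c₂ := by
    simp only [c₂, smul_mul_assoc, mul_smul_comm, add_mul, mul_add, one_mul, mul_one, mul_neg,
      mul_assoc, SpH.mul_self_eq_neg_one hJ, ← mul_assoc I I, SpH.mul_self_eq_neg_one hI, neg_mul]
    module
  have hCR := ((hf.isCauchyRiemannOn hI).sub (((hf.isCauchyRiemannOn hJ).const_mul hc₁).mono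
    (hax.sliceParams_subset hI hJ))).sub (((hf.isCauchyRiemannOn (SpH.neg_mem hJ)).const_mul
    hc₂).mono (hax.sliceParams_subset hI (SpH.neg_mem hJ)))
  obtain ⟨x₀, hx₀⟩ := hΩ.2.2.1
  have hc : c₁ + c₂ = 1 := by
    rw [← smul_add, sub_add_add_cancel, ← two_smul ℝ, smul_smul]
    norm_num
  have h₀ : (x₀, (0 : ℝ)) ∈ sliceParams I Ω := by simpa [sliceParams] using hx₀
  have hzero : ∀ t : ℝ, f (t + (0 : ℝ) • I) - c₁ * f (t + (0 : ℝ) • J) -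
      c₂ * f (t + (0 : ℝ) • -J) = 0 := fun t => by
    rw [zero_smul, zero_smul, zero_smul, add_zero, sub_sub, ← add_mul, hc, one_mul, sub_self]
  have := hCR.eqOn_zero_of_preconnected_of_eventually_eq_zero (SpH.mul_self_eq_neg_one hI)
    (isOpen_sliceParams I hΩ.1) (isPreconnected_sliceParams hI (hΩ.2.2.2 I hI).isPreconnected)
    h₀ (Eventually.of_forall hzero)
    (show (x, y) ∈ sliceParams I Ω from hxy)
  rwa [Function.uncurry_apply_pair, Pi.zero_apply, sub_sub, sub_eq_zero] at this

theorem SliceRegularOn.exists_eq_add_mul (hΩ : IsSDomain Ω) (hax : AxSymm Ω)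
    (hf : SliceRegularOn f Ω) (x y : ℝ) :
    ∃ a b : ℍ[ℝ], ∀ I ∈ SpH, (x : ℍ[ℝ]) + y • I ∈ Ω → f ((x : ℍ[ℝ]) + y • I) = a + I * b := by
  obtain ⟨J, hJ⟩ := SpH.nonempty
  refine ⟨(2 : ℝ)⁻¹ • (f ((x : ℍ[ℝ]) + y • J) + f ((x : ℍ[ℝ]) + y • -J)),
    (2 : ℝ)⁻¹ • (J * (f ((x : ℍ[ℝ]) + y • -J) - f ((x : ℍ[ℝ]) + y • J))), fun I hI hxy => ?_⟩
  rw [hf.eq_smul_mul_add_smul_mul hΩ hax hI hJ hxy]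
  simp only [smul_mul_assoc, mul_smul_comm, sub_mul, add_mul, mul_sub, one_mul, mul_assoc]
  module

end RepresentationFormula

/-- The two terms of the General Representation Formula do not depend on `J, K`. -/
theorem representation_formula_coefficients
    (Ω : Set ℍ[ℝ]) (hΩ : IsSDomain Ω) (hax : AxSymm Ω)
    (f : ℍ[ℝ] → ℍ[ℝ]) (hf : SliceRegularOn f Ω)
    (x y : ℝ) (hxy : ∀ I ∈ SpH, (x : ℍ[ℝ]) + y • I ∈ Ω) :
    ∃ b c : ℍ[ℝ], ∀ J ∈ SpH, ∀ K ∈ SpH, J ≠ K →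
      (J - K)⁻¹ * (J * f ((x : ℍ[ℝ]) + y • J) - K * f ((x : ℍ[ℝ]) + y • K)) = b ∧
      (J - K)⁻¹ * (f ((x : ℍ[ℝ]) + y • J) - f ((x : ℍ[ℝ]) + y • K)) = c := by
  obtain ⟨a, b, hab⟩ := hf.exists_eq_add_mul hΩ hax x y
  refine ⟨a, b, fun J hJ K hK hJK => ?_⟩
  rw [hab J hJ (hxy J hJ), hab K hK (hxy K hK)]
  have hJK₀ : J - K ≠ 0 := sub_ne_zero.2 hJK
  constructor
  · have : J * (a + J * b) - K * (a + K * b) = (J - K) * a := by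
      rw [mul_add, mul_add, ← mul_assoc, ← mul_assoc, SpH.mul_self_eq_neg_one hJ, SpH.mul_self_eq_neg_one hK, sub_mul]
      abel
    rw [this, inv_mul_cancel_left₀ hJK₀]
  · rw [add_sub_add_left_eq_sub, ← sub_mul, inv_mul_cancel_left₀ hJK₀]
end
end

section
/- Let Ω ⊆ ℍ be a domain such that Ω ∩ ℝ ≠ ∅. Then the symmetric completion Ω̃ of Ω is an axially symmetric s-domain. -/
open Quaternion

noncomputable section

/-!
A quaternion `q` lies in `Ω̃` exactly when, for some `J ∈ 𝕊`, the point `toSlice J q` of the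
half-slice `{x + yJ : y ≥ 0}` with the same real part and the same imaginary modulus lies in `Ω`.
Since each `toSlice J` is continuous, `Ω̃` is a union of open preimages of `Ω`. The slice
`Ω̃ ∩ L_I` is the union of the images of `Ω` under `toSlice I` and `toSlice (-I)`; these are
connected and both contain the real point `x₀ ∈ Ω`, which `toSlice` fixes. Every point of `Ω̃`
lies in one of these slices, so `Ω̃` is connected too.
-/

section SymmetricCompletion

lemma neg_mem_SpH {I : ℍ[ℝ]} (hI : I ∈ SpH) : -I ∈ SpH :=
  ⟨by simp [hI.1], by simp [hI.2]⟩

lemma coe_complexI_mem_SpH : ((Complex.I : ℂ) : ℍ[ℝ]) ∈ SpH := by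
  refine ⟨by simp, ?_⟩
  rw [← pow_eq_one_iff_of_nonneg (norm_nonneg _) two_ne_zero, sq, ← normSq_eq_norm_mul_self]
  simp [normSq_def']

variable {I : ℍ[ℝ]}

lemma re_coe_add_smul (hI : I ∈ SpH) (x y : ℝ) : ((x : ℍ[ℝ]) + y • I).re = x := by
  simp [hI.1]

lemma norm_im_coe_add_smul (hI : I ∈ SpH) (x y : ℝ) : ‖((x : ℍ[ℝ]) + y • I).im‖ = |y| := by
  have hIm : I.im = I := by rw [← I.re_add_im, hI.1]; simp
  simp [hIm, norm_smul, hI.2]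

lemma smul_eq_abs_smul_or_abs_smul_neg (y : ℝ) (I : ℍ[ℝ]) :
    y • I = |y| • I ∨ y • I = |y| • -I := by
  rcases le_or_gt 0 y with hy | hy
  · exact .inl (by rw [abs_of_nonneg hy])
  · exact .inr (by rw [abs_of_neg hy, smul_neg, neg_smul, neg_neg])

def toSlice (J q : ℍ[ℝ]) : ℍ[ℝ] := (q.re : ℍ[ℝ]) + ‖q.im‖ • J

lemma continuous_toSlice (J : ℍ[ℝ]) : Continuous (toSlice J) :=
  (continuous_coe.comp continuous_re).add (continuous_im.norm.smul continuous_const)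

lemma toSlice_mem_sliceL (I q : ℍ[ℝ]) : toSlice I q ∈ sliceL I := ⟨q.re, ‖q.im‖, rfl⟩

lemma toSlice_neg_mem_sliceL (I q : ℍ[ℝ]) : toSlice (-I) q ∈ sliceL I :=
  ⟨q.re, -‖q.im‖, by rw [toSlice, smul_neg, neg_smul]⟩

lemma toSlice_coe (J : ℍ[ℝ]) (x : ℝ) : toSlice J x = x := by
  simp [toSlice]

lemma toSlice_coe_add_smul (J : ℍ[ℝ]) (hI : I ∈ SpH) (x y : ℝ) :
    toSlice J ((x : ℍ[ℝ]) + y • I) = x + |y| • J := by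
  rw [toSlice, re_coe_add_smul hI, norm_im_coe_add_smul hI]

lemma toSlice_toSlice (J : ℍ[ℝ]) (hI : I ∈ SpH) (q : ℍ[ℝ]) :
    toSlice J (toSlice I q) = toSlice J q := by
  rw [show toSlice I q = q.re + ‖q.im‖ • I from rfl, toSlice_coe_add_smul J hI, abs_norm, toSlice]

lemma exists_toSlice_eq_self (q : ℍ[ℝ]) : ∃ J ∈ SpH, toSlice J q = q := by
  by_cases h : q.im = 0
  · refine ⟨_, coe_complexI_mem_SpH, ?_⟩
    rw [toSlice, h, norm_zero, zero_smul, add_zero]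
    conv_rhs => rw [← q.re_add_im, h, add_zero]
  · have hn : ‖q.im‖ ≠ 0 := norm_ne_zero_iff.2 h
    refine ⟨‖q.im‖⁻¹ • q.im, ⟨by simp, ?_⟩, ?_⟩
    · rw [norm_smul, norm_inv, norm_norm, inv_mul_cancel₀ hn]
    · rw [toSlice, smul_smul, mul_inv_cancel₀ hn, one_smul, re_add_im]

lemma coe_mem_sliceL (I : ℍ[ℝ]) (x : ℝ) : (x : ℍ[ℝ]) ∈ sliceL I := ⟨x, 0, by simp⟩

lemma exists_mem_sliceL (q : ℍ[ℝ]) : ∃ I ∈ SpH, q ∈ sliceL I := by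
  obtain ⟨I, hI, hq⟩ := exists_toSlice_eq_self q
  exact ⟨I, hI, hq ▸ toSlice_mem_sliceL I q⟩

variable {S : Set ℍ[ℝ]}

lemma mem_symmComp_iff {q : ℍ[ℝ]} : q ∈ symmComp S ↔ ∃ J ∈ SpH, toSlice J q ∈ S := by
  constructor
  · rintro ⟨x, y, I, hI, rfl, J, hJ, hxy⟩
    rcases smul_eq_abs_smul_or_abs_smul_neg y J with h | h
    · exact ⟨J, hJ, by rwa [toSlice_coe_add_smul _ hI, ← h]⟩
    · exact ⟨-J, neg_mem_SpH hJ, by rwa [toSlice_coe_add_smul _ hI, ← h]⟩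
  · rintro ⟨J, hJ, hq⟩
    obtain ⟨I, hI, hqI⟩ := exists_toSlice_eq_self q
    exact ⟨q.re, ‖q.im‖, I, hI, hqI.symm, J, hJ, hq⟩

lemma subset_symmComp : S ⊆ symmComp S := fun q hq =>
  mem_symmComp_iff.2 <| (exists_toSlice_eq_self q).imp fun _ ⟨hJ, hq'⟩ => ⟨hJ, hq'.symm ▸ hq⟩

lemma toSlice_mem_symmComp (hI : I ∈ SpH) {q : ℍ[ℝ]} (hq : q ∈ S) :
    toSlice I q ∈ symmComp S := by
  obtain ⟨J, hJ, hqJ⟩ := exists_toSlice_eq_self q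
  exact mem_symmComp_iff.2 ⟨J, hJ, by rwa [toSlice_toSlice J hI, hqJ]⟩

lemma symmComp_eq_iUnion_preimage : symmComp S = ⋃ J ∈ SpH, toSlice J ⁻¹' S := by
  ext q
  simp only [mem_symmComp_iff, Set.mem_iUnion, Set.mem_preimage, exists_prop]

lemma IsOpen.symmComp (hS : IsOpen S) : IsOpen (symmComp S) := by
  rw [symmComp_eq_iUnion_preimage]
  exact isOpen_biUnion fun J _ => hS.preimage (continuous_toSlice J)

lemma axSymm_symmComp : AxSymm (symmComp S) := by
  intro x y I hI hxy J hJ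
  obtain ⟨K, hK, hS⟩ := mem_symmComp_iff.1 hxy
  exact mem_symmComp_iff.2 ⟨K, hK, by rwa [toSlice_coe_add_smul K hJ, ← toSlice_coe_add_smul K hI]⟩

lemma symmComp_inter_sliceL (hI : I ∈ SpH) :
    symmComp S ∩ sliceL I = toSlice I '' S ∪ toSlice (-I) '' S := by
  ext q
  constructor
  · rintro ⟨hq, a, b, rfl⟩
    obtain ⟨J, hJ, hqJ⟩ := mem_symmComp_iff.1 hq
    rcases smul_eq_abs_smul_or_abs_smul_neg b I with h | h
    · exact .inl ⟨_, hqJ, by rw [toSlice_toSlice I hJ, toSlice_coe_add_smul I hI, h]⟩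
    · exact .inr ⟨_, hqJ, by rw [toSlice_toSlice (-I) hJ, toSlice_coe_add_smul (-I) hI, h]⟩
  · rintro (⟨p, hp, rfl⟩ | ⟨p, hp, rfl⟩)
    · exact ⟨toSlice_mem_symmComp hI hp, toSlice_mem_sliceL I p⟩
    · exact ⟨toSlice_mem_symmComp (neg_mem_SpH hI) hp, toSlice_neg_mem_sliceL I p⟩

variable {x₀ : ℝ}

lemma IsConnected.symmComp_inter_sliceL (hS : IsConnected S) (hx₀ : (x₀ : ℍ[ℝ]) ∈ S)
    (hI : I ∈ SpH) : IsConnected (symmComp S ∩ sliceL I) := by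
  have hx₀' : ∀ J, (x₀ : ℍ[ℝ]) ∈ toSlice J '' S := fun J => ⟨_, hx₀, toSlice_coe J x₀⟩
  rw [_root_.symmComp_inter_sliceL hI]
  exact (hS.image _ (continuous_toSlice I).continuousOn).union ⟨_, hx₀' I, hx₀' (-I)⟩
    (hS.image _ (continuous_toSlice (-I)).continuousOn)

lemma IsConnected.symmComp (hS : IsConnected S) (hx₀ : (x₀ : ℍ[ℝ]) ∈ S) :
    IsConnected (symmComp S) := by
  refine ⟨⟨_, subset_symmComp hx₀⟩, isPreconnected_of_forall (x₀ : ℍ[ℝ]) fun q hq => ?_⟩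
  obtain ⟨I, hI, hqI⟩ := exists_mem_sliceL q
  exact ⟨_, Set.inter_subset_left, ⟨subset_symmComp hx₀, coe_mem_sliceL I x₀⟩, ⟨hq, hqI⟩,
    (hS.symmComp_inter_sliceL hx₀ hI).isPreconnected⟩

end SymmetricCompletion

/-- The symmetric completion of a domain meeting the real axis is an axially symmetric
s-domain. -/
theorem symmComp_isSDomain
    (Ω : Set ℍ[ℝ]) (hopen : IsOpen Ω) (hconn : IsConnected Ω)
    (hre : ∃ x : ℝ, (x : ℍ[ℝ]) ∈ Ω) :
    IsSDomain (symmComp Ω) ∧ AxSymm (symmComp Ω) := by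
  obtain ⟨x₀, hx₀⟩ := hre
  exact ⟨⟨hopen.symmComp, hconn.symmComp hx₀, ⟨x₀, subset_symmComp hx₀⟩,
    fun _ hI => hconn.symmComp_inter_sliceL hx₀ hI⟩, axSymm_symmComp⟩
end
end

section
/- Let f be a slice regular function on an open set Ω ⊆ ℍ. Then for every I ∈ 𝕊 and every J ∈ 𝕊 perpendicular to I (i.e. with real inner product ⟨I, J⟩ = 0 in ℍ ≅ ℝ⁴), there exist two holomorphic functions F, G : Ω ∩ L_I → L_I such that f(z) = F(z) + G(z)·J for every z ∈ Ω ∩ L_I. -/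
open Quaternion

noncomputable section

/-! Since `I² = -1`, every quaternion splits as `a = a₊ + a₋` with `a₊ = (a - IaI)/2` commuting and
`a₋ = (a + IaI)/2` anticommuting with `I`. The commutant of `I` is `L_I`, and since `J` anticommutes
with `I` as well, `a₋J⁻¹ = -a₋J` lies in `L_I`; so `F = f₊` and `G = -f₋J` work. Both projections
are real-linear and commute with left multiplication by `I`, hence preserve the Cauchy–Riemann
equation `∂f/∂x + I ∂f/∂y = 0`. -/

namespace Quaternion

theorem mul_self_of_mem_SpH {I : ℍ[ℝ]} (hI : I ∈ SpH) : I * I = -1 := by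
  have hsq := sq_eq_neg_normSq.2 hI.1
  rw [normSq_eq_norm_mul_self, hI.2, mul_one, coe_one] at hsq
  rwa [← sq]

theorem mul_add_mul_of_re_eq_zero {a b : ℍ[ℝ]} (ha : a.re = 0) (hb : b.re = 0) :
    a * b + b * a = ((-2 * (a * star b).re : ℝ) : ℍ[ℝ]) := by
  have hab : (a + b).re = 0 := by simp [ha, hb]
  have hsq := sq_eq_neg_normSq.2 hab
  rw [sq, normSq_add, add_mul, mul_add, mul_add, ← sq, ← sq (a := b),
    sq_eq_neg_normSq.2 ha, sq_eq_neg_normSq.2 hb] at hsq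
  rw [← sub_eq_zero, ← sub_eq_zero.2 hsq]
  push_cast
  noncomm_ring

theorem mul_eq_neg_mul_of_re_mul_star_eq_zero {I J : ℍ[ℝ]} (hI : I.re = 0) (hJ : J.re = 0)
    (hperp : (I * star J).re = 0) : I * J = -(J * I) := by
  have h := mul_add_mul_of_re_eq_zero hI hJ
  rw [hperp, mul_zero, coe_zero] at h
  exact eq_neg_of_add_eq_zero_left h

theorem mem_sliceL_of_commute {I c : ℍ[ℝ]} (hI : I ∈ SpH) (hc : Commute I c) :
    c ∈ sliceL I := by
  have him : I * c.im = c.im * I := by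
    have hc' := hc.eq
    rw [← re_add_im c, mul_add, add_mul, coe_commutes] at hc'
    exact add_left_cancel hc'
  -- `I c' + c' I` is real for the imaginary part `c'`, so `I c'` is real and `c' = -I (I c')`.
  obtain ⟨r, hr⟩ : ∃ r, (I * star c.im).re = r := ⟨_, rfl⟩
  have hIc : I * c.im = ((-r : ℝ) : ℍ[ℝ]) := by
    have h := mul_add_mul_of_re_eq_zero hI.1 (re_im c)
    rw [← him] at h
    apply smul_right_injective ℍ[ℝ] (two_ne_zero' ℝ)
    dsimp only
    rw [two_smul, two_smul, h, hr, ← coe_add]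
    congr 1
    ring
  refine ⟨c.re, r, ?_⟩
  calc c = c.re + c.im := (re_add_im c).symm
    _ = c.re + -(I * (I * c.im)) := by rw [← mul_assoc, mul_self_of_mem_SpH hI, neg_one_mul, neg_neg]
    _ = c.re + r • I := by rw [hIc, mul_coe_eq_smul, neg_smul, neg_neg]

end Quaternion

section CommutingParts

variable {A : Type*} [Ring A]

theorem commute_mul_of_anticommute {I b c : A} (hb : I * b = -(b * I)) (hc : I * c = -(c * I)) :
    Commute I (b * c) := by
  rw [Commute, SemiconjBy, ← mul_assoc, hb, neg_mul, mul_assoc, hc, mul_neg, neg_neg, mul_assoc]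

theorem mul_mul_self_eq_neg {I : A} (hI : I * I = -1) (x : A) : x * I * I = -x := by
  rw [mul_assoc, hI, mul_neg_one]

variable [Algebra ℝ A]

def commutingPart (I : A) : A →ₗ[ℝ] A :=
  (2⁻¹ : ℝ) • (LinearMap.id - LinearMap.mulLeft ℝ I ∘ₗ LinearMap.mulRight ℝ I)

def anticommutingPart (I : A) : A →ₗ[ℝ] A :=
  (2⁻¹ : ℝ) • (LinearMap.id + LinearMap.mulLeft ℝ I ∘ₗ LinearMap.mulRight ℝ I)

theorem commutingPart_apply (I a : A) : commutingPart I a = (2⁻¹ : ℝ) • (a - I * a * I) := by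
  simp [commutingPart, mul_assoc]

theorem anticommutingPart_apply (I a : A) :
    anticommutingPart I a = (2⁻¹ : ℝ) • (a + I * a * I) := by
  simp [anticommutingPart, mul_assoc]

theorem commutingPart_add_anticommutingPart (I a : A) :
    commutingPart I a + anticommutingPart I a = a := by
  rw [commutingPart_apply, anticommutingPart_apply, ← smul_add, sub_add_add_cancel, ← two_smul ℝ,
    smul_smul, inv_mul_cancel₀ two_ne_zero, one_smul]

variable {I : A}

theorem commutingPart_mul_left (hI : I * I = -1) (a : A) :
    commutingPart I (I * a) = I * commutingPart I a := by
  rw [commutingPart_apply, commutingPart_apply, mul_smul_comm]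
  congr 1
  simp only [mul_sub, ← mul_assoc, hI]

theorem anticommutingPart_mul_left (hI : I * I = -1) (a : A) :
    anticommutingPart I (I * a) = I * anticommutingPart I a := by
  rw [anticommutingPart_apply, anticommutingPart_apply, mul_smul_comm]
  congr 1
  simp only [mul_add, ← mul_assoc, hI]

theorem commute_commutingPart (hI : I * I = -1) (a : A) : Commute I (commutingPart I a) := by
  rw [Commute, SemiconjBy, commutingPart_apply, mul_smul_comm, smul_mul_assoc]
  congr 1
  simp only [mul_sub, sub_mul, ← mul_assoc, hI, mul_mul_self_eq_neg hI]
  noncomm_ring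

theorem mul_anticommutingPart (hI : I * I = -1) (a : A) :
    I * anticommutingPart I a = -(anticommutingPart I a * I) := by
  rw [anticommutingPart_apply, mul_smul_comm, smul_mul_assoc, ← smul_neg]
  congr 1
  simp only [mul_add, add_mul, ← mul_assoc, hI, mul_mul_self_eq_neg hI]
  noncomm_ring

end CommutingParts

section SliceHolomorphic

variable {I : ℍ[ℝ]} {f : ℍ[ℝ] → ℍ[ℝ]} {Ω : Set ℍ[ℝ]}

theorem SliceHolomorphicOn.mono {Ω' : Set ℍ[ℝ]} (hf : SliceHolomorphicOn I f Ω) (h : Ω' ⊆ Ω) :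
    SliceHolomorphicOn I f Ω' := by
  obtain ⟨fx, fy, hfx, hfy, hcx, hcy, hcr⟩ := hf
  have hsub : {p : ℝ × ℝ | (p.1 : ℍ[ℝ]) + p.2 • I ∈ Ω'} ⊆ {p | (p.1 : ℍ[ℝ]) + p.2 • I ∈ Ω} :=
    fun _ hp => h hp
  exact ⟨fx, fy, fun x y hxy => hfx x y (h hxy), fun x y hxy => hfy x y (h hxy), hcx.mono hsub,
    hcy.mono hsub, fun x y hxy => hcr x y (h hxy)⟩

theorem SliceHolomorphicOn.linearMap_comp (T : ℍ[ℝ] →ₗ[ℝ] ℍ[ℝ]) (hT : ∀ a, T (I * a) = I * T a)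
    (hf : SliceHolomorphicOn I f Ω) : SliceHolomorphicOn I (fun q => T (f q)) Ω := by
  obtain ⟨fx, fy, hfx, hfy, hcx, hcy, hcr⟩ := hf
  let T' := LinearMap.toContinuousLinearMap T
  refine ⟨fun x y => T (fx x y), fun x y => T (fy x y),
    fun x y hxy => T'.hasFDerivAt.comp_hasDerivAt x (hfx x y hxy),
    fun x y hxy => T'.hasFDerivAt.comp_hasDerivAt y (hfy x y hxy),
    T'.continuous.comp_continuousOn hcx, T'.continuous.comp_continuousOn hcy,
    fun x y hxy => ?_⟩
  rw [← hT, ← map_add, hcr x y hxy, map_zero]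

end SliceHolomorphic

theorem splitting_lemma_general
    (Ω : Set ℍ[ℝ])
    (f : ℍ[ℝ] → ℍ[ℝ]) (hf : SliceRegularOn f Ω)
    (I J : ℍ[ℝ]) (hI : I ∈ SpH) (hJ : J ∈ SpH) (hperp : (I * star J).re = 0) :
    ∃ F G : ℍ[ℝ] → ℍ[ℝ],
      SliceHolomorphicOn I F (Ω ∩ sliceL I) ∧ Set.MapsTo F (Ω ∩ sliceL I) (sliceL I) ∧
      SliceHolomorphicOn I G (Ω ∩ sliceL I) ∧ Set.MapsTo G (Ω ∩ sliceL I) (sliceL I) ∧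
      ∀ z ∈ Ω ∩ sliceL I, f z = F z + G z * J := by
  have hII := mul_self_of_mem_SpH hI
  have hJJ := mul_self_of_mem_SpH hJ
  have hIJ := mul_eq_neg_mul_of_re_mul_star_eq_zero hI.1 hJ.1 hperp
  have hfI := (hf I hI).mono (Set.inter_subset_left (t := sliceL I))
  refine ⟨fun q => commutingPart I (f q), fun q => anticommutingPart I (f q) * -J,
    hfI.linearMap_comp _ (commutingPart_mul_left hII),
    fun q _ => mem_sliceL_of_commute hI (commute_commutingPart hII (f q)),
    hfI.linearMap_comp (LinearMap.mulRight ℝ (-J) ∘ₗ anticommutingPart I) fun a => ?_,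
    fun q _ => mem_sliceL_of_commute hI (commute_mul_of_anticommute
      (mul_anticommutingPart hII (f q)) (by rw [mul_neg, hIJ, neg_mul])),
    fun z _ => ?_⟩
  · simp only [LinearMap.comp_apply, LinearMap.mulRight_apply, anticommutingPart_mul_left hII,
      mul_assoc]
  · rw [mul_assoc, neg_mul, hJJ, neg_neg, mul_one, commutingPart_add_anticommutingPart]

/-- Splitting Lemma. -/
theorem splitting_lemma
    (Ω : Set ℍ[ℝ]) (hΩ : IsOpen Ω)
    (f : ℍ[ℝ] → ℍ[ℝ]) (hf : SliceRegularOn f Ω)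
    (I J : ℍ[ℝ]) (hI : I ∈ SpH) (hJ : J ∈ SpH) (hperp : (I * star J).re = 0) :
    ∃ F G : ℍ[ℝ] → ℍ[ℝ],
      SliceHolomorphicOn I F (Ω ∩ sliceL I) ∧ Set.MapsTo F (Ω ∩ sliceL I) (sliceL I) ∧
      SliceHolomorphicOn I G (Ω ∩ sliceL I) ∧ Set.MapsTo G (Ω ∩ sliceL I) (sliceL I) ∧
      ∀ z ∈ Ω ∩ sliceL I, f z = F z + G z * J :=
  splitting_lemma_general Ω f hf I J hI hJ hperp
end
end
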